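/- Let X be a compact topological space and f_{0,∞} = {f_n} a sequence of continuous self-maps of X, and let f_{i,∞} denote the shifted sequence {f_n}_{n≥i}. Then for every 1 ≤ i ≤ j and every open cover 𝒜 of X, h(f_{i,∞}, 𝒜) ≤ h(f_{j,∞}, 𝒜), and consequently h(f_{i,∞}) ≤ h(f_{j,∞}). -/

import Mathlib

/-!
A finite subcover of `⋁_{k<m+n} f_i^{-k}𝒜` is obtained by intersecting a minimal subcover of
`⋁_{k<m} f_i^{-k}𝒜` with the `f_i^m`-preimages of a minimal subcover of `⋁_{k<n} f_{i+m}^{-k}𝒜`,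
so `N_i(m+n) ≤ N_i(m) · N_{i+m}(n)`. After taking logarithms and dividing by `n`, the fixed factor
`N_i(m)` disappears in the limsup, which gives `h(f_{i,∞}, 𝒜) ≤ h(f_{i+m,∞}, 𝒜)`.
-/

open Filter Set

/-- `itr f i n = f (i+n-1) ∘ ⋯ ∘ f i`. -/
def itr {X : Type*} (f : ℕ → X → X) (i : ℕ) : ℕ → X → X
  | 0 => id
  | n + 1 => fun x => f (i + n) (itr f i n x)

/-- The common refinement `⋁_{k<n} (f_i^k)⁻¹(𝒜)` for the shifted system `f_{i,∞}`. -/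
def refCoverAt {X : Type*} (f : ℕ → X → X) (i n : ℕ) (𝒜 : Set (Set X)) : Set (Set X) :=
  {S | ∃ a : ℕ → Set X, (∀ k < n, a k ∈ 𝒜) ∧ S = ⋂ k < n, itr f i k ⁻¹' a k}

/-- Minimal cardinality of a subfamily of `𝒜` covering `X`. -/
noncomputable def coverN {X : Type*} (𝒜 : Set (Set X)) : ℕ :=
  sInf {m | ∃ B : Finset (Set X), ↑B ⊆ 𝒜 ∧ ⋃₀ (↑B : Set (Set X)) = Set.univ ∧ B.card = m}

/-- Cover entropy of the shifted system `f_{i,∞}` relative to the open cover `𝒜`. -/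
noncomputable def coverEntropyOn {X : Type*} (f : ℕ → X → X) (i : ℕ) (𝒜 : Set (Set X)) :
    EReal :=
  atTop.limsup fun n : ℕ => ((Real.log (coverN (refCoverAt f i n 𝒜)) / n : ℝ) : EReal)

/-- Topological (cover) entropy of the shifted system `f_{i,∞}`. -/
noncomputable def coverEntropy {X : Type*} [TopologicalSpace X] (f : ℕ → X → X) (i : ℕ) :
    EReal :=
  ⨆ 𝒜 ∈ {𝒜 : Set (Set X) | (∀ A ∈ 𝒜, IsOpen A) ∧ ⋃₀ 𝒜 = Set.univ},
    coverEntropyOn f i 𝒜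

theorem Set.biInter_lt_add {α : Type*} (s : ℕ → Set α) (m n : ℕ) :
    ⋂ k < m + n, s k = (⋂ k < m, s k) ∩ ⋂ k < n, s (m + k) := by
  ext x
  simp only [mem_inter_iff, mem_iInter]
  refine ⟨fun h => ⟨fun k hk => h k (by omega), fun k hk => h (m + k) (by omega)⟩, ?_⟩
  rintro ⟨hlow, hhigh⟩ k hk
  by_cases hkm : k < m
  · exact hlow k hkm
  · obtain ⟨l, rfl⟩ := Nat.exists_eq_add_of_le (not_lt.1 hkm)
    exact hhigh l (by omega)

section

variable {X : Type*}

theorem itr_add (f : ℕ → X → X) (i m : ℕ) :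
    ∀ k x, itr f i (m + k) x = itr f (i + m) k (itr f i m x)
  | 0, _ => rfl
  | k + 1, x => congrArg₂ f (add_assoc i m k).symm (itr_add f i m k x)

theorem continuous_itr [TopologicalSpace X] {f : ℕ → X → X} (hf : ∀ n, Continuous (f n))
    (i : ℕ) : ∀ n, Continuous (itr f i n)
  | 0 => continuous_id
  | n + 1 => (hf (i + n)).comp (continuous_itr hf i n)

theorem isOpen_of_mem_refCoverAt [TopologicalSpace X] {f : ℕ → X → X}
    (hf : ∀ n, Continuous (f n)) {𝒜 : Set (Set X)} (h𝒜 : ∀ A ∈ 𝒜, IsOpen A) {i n : ℕ}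
    {S : Set X} (hS : S ∈ refCoverAt f i n 𝒜) : IsOpen S := by
  obtain ⟨a, ha, rfl⟩ := hS
  exact (finite_Iio n).isOpen_biInter fun k hk => (h𝒜 _ (ha k hk)).preimage (continuous_itr hf i k)

theorem sUnion_refCoverAt {f : ℕ → X → X} {𝒜 : Set (Set X)} (h𝒜 : ⋃₀ 𝒜 = univ) (i n : ℕ) :
    ⋃₀ refCoverAt f i n 𝒜 = univ := by
  refine eq_univ_of_forall fun x => ?_
  choose a ha hxa using fun k => mem_sUnion.1 (h𝒜 ▸ mem_univ (itr f i k x))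
  exact ⟨_, ⟨a, fun k _ => ha k, rfl⟩, mem_iInter₂.2 fun k _ => hxa k⟩

theorem inter_preimage_mem_refCoverAt {f : ℕ → X → X} {𝒜 : Set (Set X)} {i m n : ℕ}
    {S T : Set X} (hS : S ∈ refCoverAt f i m 𝒜) (hT : T ∈ refCoverAt f (i + m) n 𝒜) :
    S ∩ itr f i m ⁻¹' T ∈ refCoverAt f i (m + n) 𝒜 := by
  obtain ⟨a, ha, rfl⟩ := hS
  obtain ⟨c, hc, rfl⟩ := hT
  refine ⟨fun k => if k < m then a k else c (k - m), fun k hk => ?_, ?_⟩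
  · dsimp only
    split_ifs with hkm
    exacts [ha k hkm, hc _ (by omega)]
  · rw [biInter_lt_add, preimage_iInter₂]
    congr 1
    · exact iInter₂_congr fun k hk => by simp only [hk, if_true]
    · refine iInter₂_congr fun k _ => ?_
      ext x
      simp [itr_add]

theorem coverN_le_card {𝒜 : Set (Set X)} {B : Finset (Set X)} (hB𝒜 : ↑B ⊆ 𝒜)
    (hB : ⋃₀ (↑B : Set (Set X)) = univ) : coverN 𝒜 ≤ B.card :=
  Nat.sInf_le ⟨B, hB𝒜, hB, rfl⟩

/-- Compactness is what makes `coverN` a minimum; otherwise it may be the junk value `sInf ∅ = 0`. -/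
theorem exists_finset_card_eq_coverN [TopologicalSpace X] [CompactSpace X] {𝒜 : Set (Set X)}
    (hopen : ∀ A ∈ 𝒜, IsOpen A) (hcov : ⋃₀ 𝒜 = univ) :
    ∃ B : Finset (Set X), ↑B ⊆ 𝒜 ∧ ⋃₀ (↑B : Set (Set X)) = univ ∧ B.card = coverN 𝒜 := by
  obtain ⟨b, hb𝒜, hb, hbcov⟩ := isCompact_univ.elim_finite_subcover_image (c := id) hopen
    (by simp [← sUnion_eq_biUnion, hcov])
  exact Nat.sInf_mem (s := {m | ∃ B : Finset (Set X), ↑B ⊆ 𝒜 ∧ ⋃₀ (↑B : Set (Set X)) = univ ∧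
    B.card = m}) ⟨_, hb.toFinset, by simpa using hb𝒜,
    univ_subset_iff.1 (by simpa [sUnion_eq_biUnion] using hbcov), rfl⟩

theorem coverN_refCoverAt_add_le [TopologicalSpace X] [CompactSpace X] {f : ℕ → X → X}
    (hf : ∀ n, Continuous (f n)) {𝒜 : Set (Set X)} (hopen : ∀ A ∈ 𝒜, IsOpen A)
    (hcov : ⋃₀ 𝒜 = univ) (i m n : ℕ) :
    coverN (refCoverAt f i (m + n) 𝒜) ≤
      coverN (refCoverAt f i m 𝒜) * coverN (refCoverAt f (i + m) n 𝒜) := by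
  classical
  obtain ⟨B, hB𝒜, hB, hBcard⟩ := exists_finset_card_eq_coverN
    (fun _ => isOpen_of_mem_refCoverAt hf hopen) (sUnion_refCoverAt (f := f) hcov i m)
  obtain ⟨C, hC𝒜, hC, hCcard⟩ := exists_finset_card_eq_coverN
    (fun _ => isOpen_of_mem_refCoverAt hf hopen) (sUnion_refCoverAt (f := f) hcov (i + m) n)
  let D := (B ×ˢ C).image fun p => p.1 ∩ itr f i m ⁻¹' p.2
  have hD𝒜 : ↑D ⊆ refCoverAt f i (m + n) 𝒜 := by
    simp only [D, Finset.coe_image, Finset.coe_product, image_subset_iff]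
    exact fun p hp => inter_preimage_mem_refCoverAt (hB𝒜 hp.1) (hC𝒜 hp.2)
  have hD : ⋃₀ (↑D : Set (Set X)) = univ := by
    refine eq_univ_of_forall fun x => ?_
    obtain ⟨S, hSB, hxS⟩ := mem_sUnion.1 (hB ▸ mem_univ x)
    obtain ⟨T, hTC, hxT⟩ := mem_sUnion.1 (hC ▸ mem_univ (itr f i m x))
    have hST : S ∩ itr f i m ⁻¹' T ∈ D :=
      Finset.mem_image.2 ⟨(S, T), Finset.mem_product.2 ⟨hSB, hTC⟩, rfl⟩
    exact ⟨_, hST, hxS, hxT⟩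
  calc coverN (refCoverAt f i (m + n) 𝒜) ≤ D.card := coverN_le_card hD𝒜 hD
    _ ≤ (B ×ˢ C).card := Finset.card_image_le
    _ = _ := by rw [Finset.card_product, hBcard, hCcard]

end

theorem Real.log_natCast_le_add_of_le_mul {a b c : ℕ} (h : a ≤ b * c) :
    Real.log a ≤ Real.log b + Real.log c := by
  rcases Nat.eq_zero_or_pos a with rfl | ha
  · simpa using add_nonneg (Real.log_natCast_nonneg b) (Real.log_natCast_nonneg c)
  obtain ⟨hb, hc⟩ := CanonicallyOrderedAdd.mul_pos.1 (ha.trans_le h)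
  rw [← Real.log_mul (by positivity) (by positivity)]
  exact Real.log_le_log (by exact_mod_cast ha) (by exact_mod_cast h)

theorem limsup_div_le_of_shift_le_const_add {a b : ℕ → ℝ} {C : ℝ} {m : ℕ} (ha : ∀ n, 0 ≤ a n)
    (hab : ∀ n, a (n + m) ≤ C + b n) :
    atTop.limsup (fun n : ℕ => ((a n / n : ℝ) : EReal)) ≤
      atTop.limsup (fun n : ℕ => ((b n / n : ℝ) : EReal)) := by
  have hC : atTop.limsup (fun n : ℕ => ((C / n : ℝ) : EReal)) = 0 :=
    (EReal.tendsto_coe.2 (tendsto_const_div_atTop_nhds_zero_nat C)).limsup_eq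
  have hbound : ∀ n : ℕ, 1 ≤ n → a (n + m) / (n + m : ℕ) ≤ C / n + b n / n := fun n hn => by
    have hn : (0 : ℝ) < n := by exact_mod_cast hn
    calc a (n + m) / (n + m : ℕ) ≤ a (n + m) / n :=
          div_le_div_of_nonneg_left (ha _) hn (by norm_cast; omega)
      _ ≤ (C + b n) / n := by gcongr; exact hab n
      _ = C / n + b n / n := add_div _ _ _
  calc atTop.limsup (fun n : ℕ => ((a n / n : ℝ) : EReal))
      = atTop.limsup (fun n : ℕ => ((a (n + m) / (n + m : ℕ) : ℝ) : EReal)) :=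
        (limsup_nat_add _ m).symm
    _ ≤ atTop.limsup ((fun n : ℕ => ((C / n : ℝ) : EReal)) + fun n => ((b n / n : ℝ) : EReal)) :=
        limsup_le_limsup ((eventually_ge_atTop 1).mono fun n hn =>
          EReal.coe_le_coe_iff.2 (hbound n hn)) (by isBoundedDefault) (by isBoundedDefault)
    _ ≤ atTop.limsup (fun n : ℕ => ((C / n : ℝ) : EReal)) +
          atTop.limsup (fun n : ℕ => ((b n / n : ℝ) : EReal)) :=
        EReal.limsup_add_le (.inl (hC ▸ EReal.zero_ne_bot)) (.inl (hC ▸ EReal.zero_ne_top))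
    _ = atTop.limsup (fun n : ℕ => ((b n / n : ℝ) : EReal)) := by rw [hC, zero_add]

theorem coverEntropyOn_le_add {X : Type*} [TopologicalSpace X] [CompactSpace X]
    {f : ℕ → X → X} (hf : ∀ n, Continuous (f n)) {𝒜 : Set (Set X)}
    (hopen : ∀ A ∈ 𝒜, IsOpen A) (hcov : ⋃₀ 𝒜 = univ) (i m : ℕ) :
    coverEntropyOn f i 𝒜 ≤ coverEntropyOn f (i + m) 𝒜 :=
  limsup_div_le_of_shift_le_const_add (fun _ => Real.log_natCast_nonneg _) fun n =>
    Real.log_natCast_le_add_of_le_mul (add_comm n m ▸ coverN_refCoverAt_add_le hf hopen hcov i m n)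

theorem coverEntropy_mono_shift_general {X : Type*} [TopologicalSpace X] [CompactSpace X]
    (f : ℕ → X → X) (hf : ∀ n, Continuous (f n)) (i j : ℕ) (hij : i ≤ j) :
    (∀ 𝒜 : Set (Set X), (∀ A ∈ 𝒜, IsOpen A) → ⋃₀ 𝒜 = Set.univ →
        coverEntropyOn f i 𝒜 ≤ coverEntropyOn f j 𝒜) ∧
      coverEntropy f i ≤ coverEntropy f j := by
  obtain ⟨m, rfl⟩ := Nat.exists_eq_add_of_le hij
  have h𝒜 : ∀ 𝒜 : Set (Set X), (∀ A ∈ 𝒜, IsOpen A) → ⋃₀ 𝒜 = univ →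
      coverEntropyOn f i 𝒜 ≤ coverEntropyOn f (i + m) 𝒜 :=
    fun _ hopen hcov => coverEntropyOn_le_add hf hopen hcov i m
  exact ⟨h𝒜, iSup₂_mono fun 𝒜 h => h𝒜 𝒜 h.1 h.2⟩

/-- Discarding initial maps cannot decrease entropy: for `1 ≤ i ≤ j` and any open cover
`𝒜`, `h(f_{i,∞}, 𝒜) ≤ h(f_{j,∞}, 𝒜)`, and hence `h(f_{i,∞}) ≤ h(f_{j,∞})`. -/
theorem coverEntropy_mono_shift {X : Type*} [TopologicalSpace X] [CompactSpace X]
    (f : ℕ → X → X) (hf : ∀ n, Continuous (f n)) (i j : ℕ) (hi : 1 ≤ i) (hij : i ≤ j) :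
    (∀ 𝒜 : Set (Set X), (∀ A ∈ 𝒜, IsOpen A) → ⋃₀ 𝒜 = Set.univ →
        coverEntropyOn f i 𝒜 ≤ coverEntropyOn f j 𝒜) ∧
      coverEntropy f i ≤ coverEntropy f j :=
  coverEntropy_mono_shift_general f hf i j hij
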